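/- For every prime power q, the cyclic group of order q² + q + 1 has difference size exactly q + 1, i.e., Δ[C_{q²+q+1}] = q + 1. -/

import Mathlib

/-- A finset `B` is a difference basis of the group `G` if every element of `G`
can be written as `a * b⁻¹` with `a b ∈ B`. -/
def IsDiffBasis {G : Type*} [Group G] (B : Finset G) : Prop :=
  ∀ g : G, ∃ a ∈ B, ∃ b ∈ B, g = a * b⁻¹

/-- The difference size `Δ[G]` of a group `G`: the smallest cardinality of a difference basis. -/
noncomputable def diffSize (G : Type*) [Group G] : ℕ :=
  sInf {k | ∃ B : Finset G, B.card = k ∧ IsDiffBasis B}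

/-- The difference characteristic `ð[G] = Δ[G]/√|G|`. -/
noncomputable def diffChar (G : Type*) [Group G] : ℝ :=
  (diffSize G : ℝ) / Real.sqrt (Nat.card G)

/-!
Singer's construction. Let `L / K` be a cubic extension of finite fields with `|K| = q`. The
cyclic group `Lˣ / Kˣ` has order `(q³ - 1) / (q - 1) = q² + q + 1`. For a `K`-plane `V ⊆ L`, the
classes of the nonzero vectors of `V` form a set `B` of `(q² - 1) / (q - 1) = q + 1` elements, and
it is a difference basis: for `y ≠ 0` the planes `V` and `y⁻¹V` of the three-dimensional space `L`
meet in some `x ≠ 0`, so `y = (y x) x⁻¹` with `x, y x ∈ V`. No smaller basis exists, since a basis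
`B` covers the group by the `|B|²` quotients `a b⁻¹`.
-/

open Finset Module

lemma Nat.pow_three_sub_one_eq_mul (q : ℕ) : q ^ 3 - 1 = (q ^ 2 + q + 1) * (q - 1) := by
  cases q with
  | zero => rfl
  | succ m =>
    rw [Nat.add_sub_cancel, Nat.sub_eq_iff_eq_add (Nat.one_le_pow _ _ (by omega))]
    ring

section DiffBasis

variable {G H : Type*} [Group G] [Group H]

lemma IsDiffBasis.image [DecidableEq H] {f : G →* H} (hf : Function.Surjective f)
    {B : Finset G} (hB : IsDiffBasis B) : IsDiffBasis (B.image f) := by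
  intro h
  obtain ⟨g, rfl⟩ := hf h
  obtain ⟨a, ha, b, hb, rfl⟩ := hB g
  exact ⟨f a, mem_image_of_mem f ha, f b, mem_image_of_mem f hb, by simp⟩

lemma IsDiffBasis.natCard_le {B : Finset G} (hB : IsDiffBasis B) :
    Nat.card G ≤ #B * #B := by
  have hsurj : Function.Surjective fun p : ↥(B ×ˢ B : Set (G × G)) => p.1.1 * p.1.2⁻¹ := by
    intro g
    obtain ⟨a, ha, b, hb, rfl⟩ := hB g
    exact ⟨⟨(a, b), by simp [ha, hb]⟩, rfl⟩
  calc Nat.card G ≤ Nat.card ↥(B ×ˢ B : Set (G × G)) := Nat.card_le_card_of_surjective _ hsurj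
    _ = #B * #B := by simp [Finset.card_product]

lemma diffSize_le {B : Finset G} (hB : IsDiffBasis B) : diffSize G ≤ #B :=
  Nat.sInf_le ⟨B, rfl, hB⟩

lemma natCard_le_diffSize_mul_diffSize [Finite G] : Nat.card G ≤ diffSize G * diffSize G := by
  classical
  have : Fintype G := Fintype.ofFinite G
  have hne : {k | ∃ B : Finset G, #B = k ∧ IsDiffBasis B}.Nonempty :=
    ⟨_, univ, rfl, fun g => ⟨g, mem_univ _, 1, mem_univ _, by simp⟩⟩
  obtain ⟨B, hBcard, hB⟩ := Nat.sInf_mem hne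
  rw [diffSize, ← hBcard]
  exact hB.natCard_le

lemma diffSize_congr (e : G ≃* H) : diffSize G = diffSize H := by
  classical
  unfold diffSize
  congr 1
  ext k
  constructor
  · rintro ⟨B, rfl, hB⟩
    exact ⟨B.image e, card_image_of_injective _ e.injective,
      hB.image (f := e.toMonoidHom) e.surjective⟩
  · rintro ⟨B, rfl, hB⟩
    exact ⟨B.image e.symm, card_image_of_injective _ e.symm.injective,
      hB.image (f := e.symm.toMonoidHom) e.symm.surjective⟩

lemma diffSize_eq_of_natCard_eq {q : ℕ} (hG : Nat.card G = q ^ 2 + q + 1) {B : Finset G}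
    (hB : IsDiffBasis B) (hBcard : #B ≤ q + 1) : diffSize G = q + 1 := by
  have : Finite G := Nat.finite_of_card_ne_zero (by omega)
  have hle := (diffSize_le hB).trans hBcard
  have hge := hG ▸ natCard_le_diffSize_mul_diffSize (G := G)
  nlinarith

end DiffBasis

section Singer

variable (K L : Type*) [Field K] [Field L] [Algebra K L]

abbrev baseUnits : Subgroup Lˣ := (Units.map (algebraMap K L : K →* L)).range

lemma natCard_baseUnits : Nat.card (baseUnits K L) = Nat.card K - 1 := by
  have hinj : Function.Injective (Units.map (algebraMap K L : K →* L)) :=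
    Units.map_injective (algebraMap K L).injective
  rw [← Nat.card_units K, ← Nat.card_congr (MonoidHom.ofInjective hinj).toEquiv]

lemma natCard_quotient_baseUnits_mul :
    Nat.card (Lˣ ⧸ baseUnits K L) * (Nat.card K - 1) = Nat.card L - 1 := by
  rw [← Nat.card_units L, Subgroup.card_eq_card_quotient_mul_card_subgroup (baseUnits K L),
    natCard_baseUnits]

variable {K L}

lemma exists_submodule_finrank_eq {F M : Type*} [DivisionRing F] [AddCommGroup M] [Module F M]
    [FiniteDimensional F M] {m : ℕ} (hm : m ≤ finrank F M) :
    ∃ V : Submodule F M, finrank F V = m := by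
  let b := Module.finBasis F M
  have hli : LinearIndependent F fun i : Fin m => b (Fin.castLE hm i) :=
    b.linearIndependent.comp _ (Fin.castLE_injective hm)
  exact ⟨_, (finrank_span_eq_card hli).trans (Fintype.card_fin m)⟩

lemma exists_ne_zero_mem_mul_mem [FiniteDimensional K L] {V : Submodule K L}
    (hV : finrank K L < 2 * finrank K V) (y : Lˣ) : ∃ x ∈ V, x ≠ 0 ∧ (y : L) * x ∈ V := by
  let e : L ≃ₗ[K] L := DistribMulAction.toLinearEquiv K L y
  have hW : finrank K (V.comap (e : L →ₗ[K] L)) = finrank K V := by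
    rw [Submodule.comap_equiv_eq_map_symm, LinearEquiv.finrank_map_eq]
  have hndisj : ¬ Disjoint V (V.comap (e : L →ₗ[K] L)) := fun h => by
    have := Submodule.finrank_add_finrank_le_of_disjoint h
    omega
  rw [Submodule.disjoint_def] at hndisj
  push Not at hndisj
  obtain ⟨x, hxV, hxW, hx0⟩ := hndisj
  exact ⟨x, hxV, hx0, hxW⟩

def projImage (V : Submodule K L) : Set (Lˣ ⧸ baseUnits K L) :=
  QuotientGroup.mk '' {u : Lˣ | (u : L) ∈ V}

lemma exists_mem_projImage_mul_inv [FiniteDimensional K L] {V : Submodule K L}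
    (hV : finrank K L < 2 * finrank K V) (g : Lˣ ⧸ baseUnits K L) :
    ∃ a ∈ projImage V, ∃ b ∈ projImage V, g = a * b⁻¹ := by
  obtain ⟨y, rfl⟩ := QuotientGroup.mk_surjective g
  obtain ⟨x, hxV, hx0, hyx⟩ := exists_ne_zero_mem_mul_mem hV y
  let u := Units.mk0 x hx0
  refine ⟨_, ⟨y * u, hyx, rfl⟩, _, ⟨u, hxV, rfl⟩, ?_⟩
  simp

lemma preimage_mk_projImage (V : Submodule K L) :
    QuotientGroup.mk ⁻¹' projImage V = {u : Lˣ | (u : L) ∈ V} := by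
  ext u
  refine ⟨?_, fun hu => ⟨u, hu, rfl⟩⟩
  rintro ⟨v, hv, hvu⟩
  obtain ⟨c, hc⟩ := QuotientGroup.eq.mp hvu
  rw [eq_inv_mul_iff_mul_eq] at hc
  have : (u : L) = (c : K) • (v : L) := by
    rw [← hc, Algebra.smul_def, mul_comm]
    rfl
  simpa [this] using V.smul_mem (c : K) hv

lemma natCard_units_mem_submodule [Finite L] (V : Submodule K L) :
    Nat.card {u : Lˣ | (u : L) ∈ V} = Nat.card V - 1 := by
  have himage : ((↑) : Lˣ → L) '' {u | (u : L) ∈ V} = (V : Set L) \ {0} := by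
    ext x
    refine ⟨?_, fun ⟨hxV, hx0⟩ => ⟨Units.mk0 x hx0, hxV, rfl⟩⟩
    rintro ⟨u, hu, rfl⟩
    exact ⟨hu, u.ne_zero⟩
  rw [Nat.card_coe_set_eq, ← Set.ncard_image_of_injective _ Units.val_injective, himage,
    Set.ncard_sdiff_singleton_of_mem V.zero_mem, ← Nat.card_coe_set_eq]
  rfl

lemma natCard_projImage_mul [Finite L] (V : Submodule K L) :
    Nat.card (projImage V) * (Nat.card K - 1) = Nat.card V - 1 := by
  rw [← natCard_units_mem_submodule, ← preimage_mk_projImage, QuotientGroup.card_preimage_mk,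
    natCard_baseUnits, mul_comm]

variable (K L) in
theorem natCard_quotient_baseUnits_of_finrank_eq_three [Finite L] (h : finrank K L = 3) :
    Nat.card (Lˣ ⧸ baseUnits K L) = Nat.card K ^ 2 + Nat.card K + 1 := by
  have : Finite K := Finite.of_injective _ (algebraMap K L).injective
  have hq : 1 < Nat.card K := Finite.one_lt_card
  have hL : Nat.card L = Nat.card K ^ 3 := h ▸ Module.natCard_eq_pow_finrank
  have hmul := natCard_quotient_baseUnits_mul K L
  rw [hL, Nat.pow_three_sub_one_eq_mul] at hmul
  exact Nat.eq_of_mul_eq_mul_right (by omega) hmul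

theorem diffSize_quotient_baseUnits_of_finrank_eq_three [Finite L] (h : finrank K L = 3) :
    diffSize (Lˣ ⧸ baseUnits K L) = Nat.card K + 1 := by
  have : Finite K := Finite.of_injective _ (algebraMap K L).injective
  have : FiniteDimensional K L := Module.Finite.of_finite
  have hq : 1 < Nat.card K := Finite.one_lt_card
  obtain ⟨V, hV⟩ := exists_submodule_finrank_eq (F := K) (M := L) (m := 2) (by omega)
  have hVcard : Nat.card V = Nat.card K ^ 2 := hV ▸ Module.natCard_eq_pow_finrank
  let B := (Set.toFinite (projImage V)).toFinset
  have hB : IsDiffBasis B := fun g => by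
    simpa [B] using exists_mem_projImage_mul_inv (by omega) g
  have hBcard : #B = Nat.card K + 1 := by
    have hmul := natCard_projImage_mul V
    rw [hVcard, Nat.card_eq_card_finite_toFinset (Set.toFinite _), ← one_pow 2, Nat.sq_sub_sq,
      one_pow] at hmul
    exact Nat.eq_of_mul_eq_mul_right (by omega) hmul
  exact diffSize_eq_of_natCard_eq (natCard_quotient_baseUnits_of_finrank_eq_three K L h) hB
    hBcard.le

end Singer

theorem stmt12 (q : ℕ) (hq : IsPrimePow q) :
    diffSize (Multiplicative (ZMod (q ^ 2 + q + 1))) = q + 1 := by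
  obtain ⟨p, k, hp, hk, rfl⟩ := hq
  have : Fact p.Prime := ⟨hp.nat_prime⟩
  let K := GaloisField p k
  let L := FiniteField.Extension K p 3
  have hK : Nat.card K = p ^ k := GaloisField.card p k hk.ne'
  have hL : finrank K L = 3 := FiniteField.finrank_extension K p 3
  have : IsCyclic (Lˣ ⧸ baseUnits K L) := isCyclic_of_surjective _ (QuotientGroup.mk'_surjective _)
  rw [← hK, ← natCard_quotient_baseUnits_of_finrank_eq_three K L hL,
    diffSize_congr (zmodCyclicMulEquiv this)]
  exact diffSize_quotient_baseUnits_of_finrank_eq_three hL
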